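/- arXiv:2107.00601 — 3 statements merged into one kernel-verified Lean document; each statement's English description precedes it below -/
import Mathlib

section
/- Let {ξ_k} be a sequence of positive reals that is monotonically nonincreasing (0 < ξ_{k+1} <= ξ_k for all k) and suppose that whenever ξ_{k+1} = ξ_k there exists a point satisfying f(x_{k+1}) <= f(x_k) - ξ_k, where f is continuous on a compact set X containing all x_k. Then ξ_k converges to 0. -/
/-!
Each step either keeps `ξ` or multiplies it by `θ < 1`, so `ξ` decreases to some limit `L ≥ 0`.
If `L > 0`, then eventually `θ ξ_k < L ≤ ξ_{k+1}`, so no further multiplication by `θ` can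
happen: `ξ` is eventually constant, equal to some `c > 0`, and from then on every step lowers
`f (x k)` by at least `c`. That contradicts the boundedness of `f` on the compact set `X`.
-/

open Filter Set Topology

section StepEqOrMul

variable {ξ : ℕ → ℝ} {θ : ℝ}

lemma antitone_of_step_eq_or_mul (hpos : ∀ k, 0 ≤ ξ k) (hθ : θ ≤ 1)
    (hupd : ∀ k, ξ (k + 1) = ξ k ∨ ξ (k + 1) = θ * ξ k) : Antitone ξ := by
  refine antitone_nat_of_succ_le fun k => ?_
  rcases hupd k with h | h
  · exact h.le
  · rw [h]
    exact mul_le_of_le_one_left (hpos k) hθ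

lemma eventually_step_eq_of_tendsto_pos {L : ℝ} (hθ : θ ∈ Ioo 0 1)
    (hupd : ∀ k, ξ (k + 1) = ξ k ∨ ξ (k + 1) = θ * ξ k) (hanti : Antitone ξ)
    (hξ : Tendsto ξ atTop (𝓝 L)) (hL : 0 < L) : ∀ᶠ k in atTop, ξ (k + 1) = ξ k := by
  have hL_lt : L < L / θ := by
    rw [lt_div_iff₀ hθ.1]
    exact mul_lt_of_lt_one_right hL hθ.2
  filter_upwards [hξ.eventually (eventually_lt_nhds hL_lt)] with k hk
  refine (hupd k).resolve_right fun hmul => ?_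
  have hL_le : L ≤ θ * ξ k := hmul ▸ hanti.le_of_tendsto hξ (k + 1)
  rw [lt_div_iff₀ hθ.1] at hk
  linarith

end StepEqOrMul

lemma eq_of_step_eq_of_le {ξ : ℕ → ℝ} {N : ℕ} (h : ∀ k ≥ N, ξ (k + 1) = ξ k) :
    ∀ k ≥ N, ξ k = ξ N := by
  intro k hk
  induction k, hk using Nat.le_induction with
  | base => rfl
  | succ k hk ih => rw [h k hk, ih]

lemma not_bddBelow_range_of_sub_le {a : ℕ → ℝ} {c : ℝ} {N : ℕ} (hc : 0 < c)
    (h : ∀ k ≥ N, a (k + 1) ≤ a k - c) : ¬ BddBelow (range a) := by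
  have hlin : ∀ m : ℕ, a (N + m) ≤ a N - m * c := by
    intro m
    induction m with
    | zero => simp
    | succ m ih =>
      calc a (N + m + 1) ≤ a (N + m) - c := h _ (Nat.le_add_right N m)
        _ ≤ a N - (m + 1 : ℕ) * c := by push_cast; linarith
  rintro ⟨b, hb⟩
  obtain ⟨m, hm⟩ := exists_nat_gt ((a N - b) / c)
  rw [div_lt_iff₀ hc] at hm
  linarith [hb (mem_range_self (N + m)), hlin m]

theorem tendsto_zero_of_step_eq_or_mul {ξ a : ℕ → ℝ} {θ : ℝ} (ha : BddBelow (range a))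
    (hpos : ∀ k, 0 < ξ k) (hθ : θ ∈ Ioo 0 1)
    (hupd : ∀ k, ξ (k + 1) = ξ k ∨ ξ (k + 1) = θ * ξ k)
    (hdec : ∀ k, ξ (k + 1) = ξ k → a (k + 1) ≤ a k - ξ k) :
    Tendsto ξ atTop (𝓝 0) := by
  have hanti := antitone_of_step_eq_or_mul (fun k => (hpos k).le) hθ.2.le hupd
  have hbdd : BddBelow (range ξ) := ⟨0, forall_mem_range.2 fun k => (hpos k).le⟩
  have hlim := tendsto_atTop_ciInf hanti hbdd
  rcases (le_ciInf fun k => (hpos k).le).eq_or_lt with hL | hL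
  · rwa [← hL] at hlim
  obtain ⟨N, hN⟩ :=
    (eventually_step_eq_of_tendsto_pos hθ hupd hanti hlim hL).exists_forall_of_atTop
  have hconst := eq_of_step_eq_of_le hN
  refine absurd ha (not_bddBelow_range_of_sub_le (hpos N) fun k (hk : k ≥ N) => ?_)
  simpa only [hconst k hk] using hdec k (hN k hk)

/-- the sufficient-decrease parameter `ξ_k` of the DFNDFL algorithm
converges to zero. -/
theorem xi_tendsto_zero
    (n : ℕ) (X : Set (Fin n → ℝ)) (hX : IsCompact X)
    (f : (Fin n → ℝ) → ℝ) (hf : Continuous f)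
    (x : ℕ → Fin n → ℝ) (hx : ∀ k, x k ∈ X)
    (ξ : ℕ → ℝ) (hpos : ∀ k, 0 < ξ k)
    (θ : ℝ) (hθ : θ ∈ Set.Ioo (0 : ℝ) 1)
    (hupd : ∀ k, ξ (k + 1) = ξ k ∨ ξ (k + 1) = θ * ξ k)
    (hdec : ∀ k, ξ (k + 1) = ξ k → f (x (k + 1)) ≤ f (x k) - ξ k) :
    Filter.Tendsto ξ Filter.atTop (nhds 0) := by
  have hbdd : BddBelow (range (f ∘ x)) :=
    (hX.bddBelow_image hf.continuousOn).mono
      (range_subset_iff.2 fun k => mem_image_of_mem f (hx k))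
  exact tendsto_zero_of_step_eq_or_mul hbdd hpos hθ hupd hdec
end

section
/- Let x̄ ∈ X with X = [l,u] ⊆ R^n, let {x_k} ⊆ X with x_k → x̄, {s_k} unit vectors with s_k → s̄ where s̄ ∈ D^c(x̄), s̄ ≠ 0, and {η_k} positive scalars with η_k → 0. Then for all k sufficiently large the projected point satisfies [x_k + η_k s_k]_{[l,u]} ≠ x_k, and the vectors v_k = ([x_k + η_k s_k]_{[l,u]} - x_k)/η_k converge to s̄. -/
/-!
Coordinatewise, `v_k` is the difference quotient of the clamp `t ↦ max a (min b t)` at `x_k`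
in direction `s_k`. When `s̄_i = 0` it is squeezed to `0` because the clamp is 1-Lipschitz and
fixes `x_k`. When `s̄_i > 0`, feasibility of `s̄` forces `x̄_i < u_i`, so eventually
`x_k + η_k s_k` stays inside `[l_i, u_i]` and `v_k i = s_k i → s̄_i`; the case `s̄_i < 0` is
symmetric. Finally `v_k → s̄ ≠ 0` makes `v_k`, hence the step `[x_k + η_k s_k] - x_k`,
eventually nonzero.
-/

/-- Componentwise projection onto the box `[l,u]`. -/
def boxProj (n : ℕ) (l u x : Fin n → ℝ) : Fin n → ℝ :=
  fun i => max (l i) (min (u i) (x i))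

open Filter Topology

lemma abs_max_min_sub_max_min_le (a b x y : ℝ) :
    |max a (min b x) - max a (min b y)| ≤ |x - y| := by
  have h : |min b x - min b y| ≤ max |b - b| |x - y| := abs_min_sub_min_le_max _ _ _ _
  rw [sub_self, abs_zero, max_eq_right (abs_nonneg _)] at h
  rw [max_comm a, max_comm a]
  exact (abs_max_sub_max_le_abs _ _ _).trans h

lemma abs_inv_mul_max_min_add_mul_sub_le {a b x η : ℝ} (s : ℝ) (hx : a ≤ x ∧ x ≤ b)
    (hη : 0 < η) :
    |η⁻¹ * (max a (min b (x + η * s)) - x)| ≤ |s| := by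
  have hfix : max a (min b x) = x := by rw [min_eq_right hx.2, max_eq_right hx.1]
  calc |η⁻¹ * (max a (min b (x + η * s)) - x)|
      = η⁻¹ * |max a (min b (x + η * s)) - max a (min b x)| := by
        rw [abs_mul, abs_inv, abs_of_pos hη, hfix]
    _ ≤ η⁻¹ * |x + η * s - x| :=
        mul_le_mul_of_nonneg_left (abs_max_min_sub_max_min_le _ _ _ _) (inv_nonneg.mpr hη.le)
    _ = |s| := by
        rw [add_sub_cancel_left, abs_mul, abs_of_pos hη, inv_mul_cancel_left₀ hη.ne']

section Clamp

variable {ι : Type*} {L : Filter ι} {x η s : ι → ℝ} {a b xbar sbar : ℝ}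

lemma eventually_le_add_mul (hxconv : Tendsto x L (𝓝 xbar)) (hsconv : Tendsto s L (𝓝 sbar))
    (hη : ∀ k, 0 ≤ η k) (hη0 : Tendsto η L (𝓝 0)) (hx : ∀ k, a ≤ x k)
    (h : 0 < sbar ∨ a < xbar) : ∀ᶠ k in L, a ≤ x k + η k * s k := by
  rcases h with hpos | hlt
  · filter_upwards [hsconv.eventually (eventually_gt_nhds hpos)] with k hk
    linarith [hx k, mul_nonneg (hη k) hk.le]
  · have hstep : Tendsto (fun k => x k + η k * s k) L (𝓝 xbar) := by
      simpa using hxconv.add (hη0.mul hsconv)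
    exact (hstep.eventually (eventually_gt_nhds hlt)).mono fun _ => le_of_lt

lemma tendsto_inv_mul_max_min_add_mul_sub (hx : ∀ k, a ≤ x k ∧ x k ≤ b)
    (hxbar : a ≤ xbar ∧ xbar ≤ b) (hxconv : Tendsto x L (𝓝 xbar))
    (hsconv : Tendsto s L (𝓝 sbar)) (hη : ∀ k, 0 < η k) (hη0 : Tendsto η L (𝓝 0))
    (hl : xbar = a → 0 ≤ sbar) (hu : xbar = b → sbar ≤ 0) :
    Tendsto (fun k => (η k)⁻¹ * (max a (min b (x k + η k * s k)) - x k)) L (𝓝 sbar) := by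
  rcases eq_or_ne sbar 0 with rfl | hne
  · exact squeeze_zero_norm (fun k => abs_inv_mul_max_min_add_mul_sub_le (s k) (hx k) (hη k))
      (by simpa using hsconv.abs)
  have hlow : 0 < sbar ∨ a < xbar := by
    rcases hne.lt_or_gt with hneg | hpos
    · exact Or.inr (hxbar.1.lt_of_ne fun h => (hl h.symm).not_gt hneg)
    · exact Or.inl hpos
  have hup : 0 < -sbar ∨ -b < -xbar := by
    rcases hne.lt_or_gt with hneg | hpos
    · exact Or.inl (neg_pos.mpr hneg)
    · exact Or.inr (neg_lt_neg (hxbar.2.lt_of_ne fun h => (hu h).not_gt hpos))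
  have hlower := eventually_le_add_mul hxconv hsconv (fun k => (hη k).le) hη0
    (fun k => (hx k).1) hlow
  -- the upper bound is the lower bound for the reflected data `-x`, `-s`, `-b`
  have hupper := eventually_le_add_mul hxconv.neg hsconv.neg (fun k => (hη k).le) hη0
    (fun k => neg_le_neg (hx k).2) hup
  refine hsconv.congr' ?_
  filter_upwards [hlower, hupper] with k hlo hhi
  rw [min_eq_right (by linarith), max_eq_right hlo, add_sub_cancel_left,
    inv_mul_cancel_left₀ (hη k).ne']

end Clamp

theorem projected_direction_limit_general
    (n : ℕ) (Iz : Finset (Fin n)) (l u : Fin n → ℝ)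
    (x : ℕ → Fin n → ℝ) (hx : ∀ k, ∀ i, l i ≤ x k i ∧ x k i ≤ u i)
    (xbar : Fin n → ℝ) (hxbar : ∀ i, l i ≤ xbar i ∧ xbar i ≤ u i)
    (hxconv : Filter.Tendsto x Filter.atTop (nhds xbar))
    (s : ℕ → Fin n → ℝ)
    (sbar : Fin n → ℝ) (hsconv : Filter.Tendsto s Filter.atTop (nhds sbar))
    (hsbar_z : ∀ i ∈ Iz, sbar i = 0)
    (hsbar_l : ∀ i, i ∉ Iz → xbar i = l i → 0 ≤ sbar i)
    (hsbar_u : ∀ i, i ∉ Iz → xbar i = u i → sbar i ≤ 0)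
    (hsbar_ne : sbar ≠ 0)
    (η : ℕ → ℝ) (hη : ∀ k, 0 < η k)
    (hη0 : Filter.Tendsto η Filter.atTop (nhds 0)) :
    (∀ᶠ k in Filter.atTop, boxProj n l u (x k + η k • s k) ≠ x k) ∧
    Filter.Tendsto (fun k => (η k)⁻¹ • (boxProj n l u (x k + η k • s k) - x k))
      Filter.atTop (nhds sbar) := by
  have hv : Tendsto (fun k => (η k)⁻¹ • (boxProj n l u (x k + η k • s k) - x k)) atTop
      (𝓝 sbar) := by
    refine tendsto_pi_nhds.mpr fun i => ?_
    have hl : xbar i = l i → 0 ≤ sbar i := fun h =>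
      if hi : i ∈ Iz then (hsbar_z i hi).ge else hsbar_l i hi h
    have hu : xbar i = u i → sbar i ≤ 0 := fun h =>
      if hi : i ∈ Iz then (hsbar_z i hi).le else hsbar_u i hi h
    exact tendsto_inv_mul_max_min_add_mul_sub (fun k => hx k i) (hxbar i)
      (tendsto_pi_nhds.mp hxconv i) (tendsto_pi_nhds.mp hsconv i) hη hη0 hl hu
  refine ⟨?_, hv⟩
  filter_upwards [hv.eventually_ne hsbar_ne] with k hk heq
  exact hk (by simp [heq])

/-- for `x_k → x̄` in the box, unit directions `s_k → s̄ ∈ D^c(x̄)`,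
`s̄ ≠ 0`, and stepsizes `η_k ↓ 0`, eventually `[x_k + η_k s_k]_{[l,u]} ≠ x_k` and
`v_k = ([x_k + η_k s_k]_{[l,u]} - x_k)/η_k → s̄`. -/
theorem projected_direction_limit
    (n : ℕ) (Iz : Finset (Fin n)) (l u : Fin n → ℝ) (hlu : ∀ i, l i < u i)
    (x : ℕ → Fin n → ℝ) (hx : ∀ k, ∀ i, l i ≤ x k i ∧ x k i ≤ u i)
    (xbar : Fin n → ℝ) (hxbar : ∀ i, l i ≤ xbar i ∧ xbar i ≤ u i)
    (hxconv : Filter.Tendsto x Filter.atTop (nhds xbar))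
    (s : ℕ → Fin n → ℝ) (hunit : ∀ k, Real.sqrt (∑ i, s k i ^ 2) = 1)
    (sbar : Fin n → ℝ) (hsconv : Filter.Tendsto s Filter.atTop (nhds sbar))
    (hsbar_z : ∀ i ∈ Iz, sbar i = 0)
    (hsbar_l : ∀ i, i ∉ Iz → xbar i = l i → 0 ≤ sbar i)
    (hsbar_u : ∀ i, i ∉ Iz → xbar i = u i → sbar i ≤ 0)
    (hsbar_ne : sbar ≠ 0)
    (η : ℕ → ℝ) (hη : ∀ k, 0 < η k)
    (hη0 : Filter.Tendsto η Filter.atTop (nhds 0)) :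
    (∀ᶠ k in Filter.atTop, boxProj n l u (x k + η k • s k) ≠ x k) ∧
    Filter.Tendsto (fun k => (η k)⁻¹ • (boxProj n l u (x k + η k • s k) - x k))
      Filter.atTop (nhds sbar) :=
  projected_direction_limit_general n Iz l u x hx xbar hxbar hxconv s sbar hsconv hsbar_z hsbar_l
    hsbar_u hsbar_ne η hη hη0
end

section
/- Under the extended MFCQ assumption, there exists a threshold ε* > 0 such that for all ε ∈ (0, ε*], the penalty function P(x; ε) = f(x) + (1/ε) Σ_i max{0, g_i(x)} has no Clarke stationary points in (X ∩ Z) \ F, where F = {x : g(x) <= 0}. Equivalently: any sequence of penalty parameters ε_k → 0 with corresponding Clarke stationary points x_k of P(·; ε_k) lying in (X ∩ Z) \ F leads to a contradiction with the EMFCQ condition at any limit point of {x_k}. -/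
open Filter

/-- The box `X = {x : l ≤ x ≤ u}`. -/
def box (n : ℕ) (l u : Fin n → ℝ) : Set (Fin n → ℝ) :=
  {x | ∀ i, l i ≤ x i ∧ x i ≤ u i}

/-- The mixed-integer lattice `Z = {x : x_i ∈ ℤ for i ∈ Iz}`. -/
def latt (n : ℕ) (Iz : Finset (Fin n)) : Set (Fin n → ℝ) :=
  {x | ∀ i ∈ Iz, ∃ a : ℤ, x i = a}

/-- The cone `D^c(x)` of feasible continuous directions at `x` w.r.t. the box. -/
def Dc (n : ℕ) (Iz : Finset (Fin n)) (l u x : Fin n → ℝ) : Set (Fin n → ℝ) :=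
  {s | (∀ i ∈ Iz, s i = 0) ∧ (∀ i, i ∉ Iz → x i = l i → 0 ≤ s i) ∧
       (∀ i, i ∉ Iz → x i = u i → s i ≤ 0)}

/-- The set `D^z(x)` of feasible primitive discrete directions at `x`. -/
def Dz (n : ℕ) (Iz : Finset (Fin n)) (l u x : Fin n → ℝ) : Set (Fin n → ℤ) :=
  {d | Finset.gcd Iz (fun i => (d i).natAbs) = 1 ∧ (∀ i, i ∉ Iz → d i = 0) ∧
       (fun i => x i + (d i : ℝ)) ∈ box n l u ∩ latt n Iz}

/-- The discrete neighborhood `B^z(x)`. -/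
def Bz (n : ℕ) (Iz : Finset (Fin n)) (l u x : Fin n → ℝ) : Set (Fin n → ℝ) :=
  {y | ∃ d ∈ Dz n Iz l u x, y = fun i => x i + (d i : ℝ)}

/-- Clarke generalized directional derivative of `f` at `x` along `s`, with respect to the
continuous variables (the limsup is over `y_c → x_c`, `y_z = x_z`, `t ↓ 0`). -/
noncomputable def clarkeDeriv (n : ℕ) (Iz : Finset (Fin n)) (f : (Fin n → ℝ) → ℝ)
    (x s : Fin n → ℝ) : ℝ :=
  Filter.limsup (fun p : (Fin n → ℝ) × ℝ => (f (p.1 + p.2 • s) - f p.1) / p.2)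
    ((nhds x ⊓ Filter.principal {y | ∀ i ∈ Iz, y i = x i}) ×ˢ nhdsWithin 0 (Set.Ioi 0))

/-- Clarke–Jahn generalized directional derivative of `f` at `x` along `s`: the limsup is
additionally restricted to points `y ∈ S` and `y + t s ∈ S` (with `S = X ∩ Z`). -/
noncomputable def clarkeJahnDeriv (n : ℕ) (Iz : Finset (Fin n)) (S : Set (Fin n → ℝ))
    (f : (Fin n → ℝ) → ℝ) (x s : Fin n → ℝ) : ℝ :=
  Filter.limsup (fun p : (Fin n → ℝ) × ℝ => (f (p.1 + p.2 • s) - f p.1) / p.2)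
    (((nhds x ⊓ Filter.principal {y | (∀ i ∈ Iz, y i = x i) ∧ y ∈ S}) ×ˢ
        nhdsWithin 0 (Set.Ioi 0)) ⊓
      Filter.principal {p : (Fin n → ℝ) × ℝ | p.1 + p.2 • s ∈ S})

/-- Clarke generalized gradient of `f` at `x` with respect to the continuous variables. -/
noncomputable def clarkeGrad (n : ℕ) (Iz : Finset (Fin n)) (f : (Fin n → ℝ) → ℝ)
    (x : Fin n → ℝ) : Set (Fin n → ℝ) :=
  {v | (∀ i ∈ Iz, v i = 0) ∧
       ∀ s : Fin n → ℝ, (∀ i ∈ Iz, s i = 0) →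
         (∑ j, s j * v j) ≤ clarkeDeriv n Iz f x s}

/-!
Argue by contradiction: take `ε_k → 0` and Clarke stationary points `x_k ∈ (X ∩ Z) \ F` of
`P(·; ε_k)`. A subsequence converges to some `x̄`; its integer coordinates are eventually
constant, so the `x_k` eventually lie in the slice of `x̄` (same integer coordinates), where
`f` and the `gᵢ` are Lipschitz, and `x̄`, a limit of infeasible points, is not interior to `F`.
EMFCQ at `x̄` then gives one of two descent directions.

* A continuous `s` with `ξ ⬝ s < 0` for all `ξ ∈ ∂_c gᵢ(x̄)`, `i` active. By Hahn–Banach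
  `gᵢ°(x̄; ·)` is the support function of `∂_c gᵢ(x̄)`, so `gᵢ°(x̄; s) < 0`, and by upper
  semicontinuity this persists at `x_k`. For a constraint `i₀` violated at infinitely many `x_k`,
  `P°(x_k; ε_k, s) ≤ L_f ‖s‖ + ε_k⁻¹ gᵢ₀°(x̄; s) / 2 < 0` eventually: continuous stationarity fails.
* A discrete `d` decreasing the total violation at `x̄`, hence at `x_k` by a fixed amount for
  large `k`; multiplied by `ε_k⁻¹` this outweighs the bounded change of `f`, so
  `P(x_k + d; ε_k) < P(x_k; ε_k)`: discrete stationarity fails.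
-/

open Set Topology
open scoped NNReal

section Slice

variable {n : ℕ} {Iz : Finset (Fin n)}

def slice (Iz : Finset (Fin n)) (x : Fin n → ℝ) : Set (Fin n → ℝ) :=
  {y | ∀ i ∈ Iz, y i = x i}

lemma mem_slice_self (x : Fin n → ℝ) : x ∈ slice Iz x := fun _ _ => rfl

lemma slice_eq_of_mem {x y : Fin n → ℝ} (hy : y ∈ slice Iz x) : slice Iz y = slice Iz x := by
  ext z
  exact forall₂_congr fun i hi => by rw [hy i hi]

lemma add_smul_mem_slice {x y s : Fin n → ℝ} (hy : y ∈ slice Iz x) (hs : ∀ i ∈ Iz, s i = 0)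
    (t : ℝ) : y + t • s ∈ slice Iz x := fun i hi => by
  simp [hs i hi, hy i hi]

lemma add_mem_slice_add {x y : Fin n → ℝ} (hy : y ∈ slice Iz x) (v : Fin n → ℝ) :
    y + v ∈ slice Iz (x + v) := fun i hi => by
  simp [hy i hi]

lemma tendsto_add_const_nhdsWithin_slice {ι : Type*} {F : Filter ι} {Y : ι → Fin n → ℝ}
    {x : Fin n → ℝ} (hY : Tendsto Y F (𝓝[slice Iz x] x)) (v : Fin n → ℝ) :
    Tendsto (fun k => Y k + v) F (𝓝[slice Iz (x + v)] (x + v)) := by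
  rw [tendsto_nhdsWithin_iff] at hY ⊢
  exact ⟨hY.1.add_const v, hY.2.mono fun _ hk => add_mem_slice_add hk v⟩

def SliceLipschitz (Iz : Finset (Fin n)) (φ : (Fin n → ℝ) → ℝ) : Prop :=
  ∃ K : ℝ≥0, ∀ x, LipschitzOnWith K φ (slice Iz x)

namespace SliceLipschitz

variable {φ ψ : (Fin n → ℝ) → ℝ}

lemma zero : SliceLipschitz Iz 0 :=
  ⟨0, fun _ => (LipschitzWith.const 0).lipschitzOnWith⟩

lemma add (hφ : SliceLipschitz Iz φ) (hψ : SliceLipschitz Iz ψ) : SliceLipschitz Iz (φ + ψ) :=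
  let ⟨K, hK⟩ := hφ
  let ⟨K', hK'⟩ := hψ
  ⟨K + K', fun x => (hK x).add (hK' x)⟩

lemma sum {ι : Type*} (T : Finset ι) {φ : ι → (Fin n → ℝ) → ℝ}
    (hφ : ∀ i ∈ T, SliceLipschitz Iz (φ i)) : SliceLipschitz Iz fun y => ∑ i ∈ T, φ i y := by
  rw [← Finset.sum_fn]
  exact Finset.sum_induction _ _ (fun _ _ => add) zero hφ

lemma const_mul (hφ : SliceLipschitz Iz φ) (c : ℝ) : SliceLipschitz Iz fun y => c * φ y :=
  let ⟨K, hK⟩ := hφ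
  ⟨‖c‖₊ * K, fun x => (lipschitzWith_smul c).comp_lipschitzOnWith (hK x)⟩

lemma max_zero (hφ : SliceLipschitz Iz φ) : SliceLipschitz Iz fun y => max 0 (φ y) :=
  let ⟨K, hK⟩ := hφ
  ⟨1 * K, fun x => (LipschitzWith.id.const_max 0).comp_lipschitzOnWith (hK x)⟩

lemma continuousWithinAt (hφ : SliceLipschitz Iz φ) (x : Fin n → ℝ) :
    ContinuousWithinAt φ (slice Iz x) x :=
  let ⟨_, hK⟩ := hφ
  (hK x).continuousOn x (mem_slice_self x)

lemma tendsto (hφ : SliceLipschitz Iz φ) {ι : Type*} {F : Filter ι} {Y : ι → Fin n → ℝ}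
    {x : Fin n → ℝ} (hY : Tendsto Y F (𝓝[slice Iz x] x)) :
    Tendsto (fun k => φ (Y k)) F (𝓝 (φ x)) :=
  (hφ.continuousWithinAt x).tendsto.comp hY

end SliceLipschitz

lemma sqrt_sum_sq_sub_le (x y : Fin n → ℝ) : √(∑ i, (x i - y i) ^ 2) ≤ √n * dist x y := by
  rw [← Real.sqrt_sq dist_nonneg, ← Real.sqrt_mul n.cast_nonneg]
  gcongr
  calc ∑ i, (x i - y i) ^ 2 = ∑ i, dist (x i) (y i) ^ 2 := by simp [Real.dist_eq, sq_abs]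
    _ ≤ ∑ _i : Fin n, dist x y ^ 2 := by gcongr with i; exact dist_le_pi_dist x y i
    _ = n * dist x y ^ 2 := by simp

lemma sliceLipschitz_of_abs_sub_le {φ : (Fin n → ℝ) → ℝ} {L : ℝ}
    (h : ∀ x y : Fin n → ℝ, (∀ i ∈ Iz, x i = y i) → |φ x - φ y| ≤ L * √(∑ i, (x i - y i) ^ 2)) :
    SliceLipschitz Iz φ := by
  refine ⟨Real.nnabs L * NNReal.sqrt n, fun x => LipschitzOnWith.of_dist_le_mul fun y hy z hz => ?_⟩
  calc dist (φ y) (φ z) = |φ y - φ z| := Real.dist_eq _ _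
    _ ≤ L * √(∑ i, (y i - z i) ^ 2) := h y z fun i hi => (hy i hi).trans (hz i hi).symm
    _ ≤ |L| * (√n * dist y z) := by gcongr; exacts [le_abs_self L, sqrt_sum_sq_sub_le y z]
    _ = _ := by simp [mul_assoc]

end Slice

section Clarke

variable {n : ℕ} {Iz : Finset (Fin n)} {φ ψ : (Fin n → ℝ) → ℝ} {x s : Fin n → ℝ} {c : ℝ}

def clarkeFilter (Iz : Finset (Fin n)) (x : Fin n → ℝ) : Filter ((Fin n → ℝ) × ℝ) :=
  𝓝[slice Iz x] x ×ˢ 𝓝[>] 0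

instance : (clarkeFilter Iz x).NeBot := by
  have : (𝓝[slice Iz x] x).NeBot :=
    mem_closure_iff_nhdsWithin_neBot.1 (subset_closure (mem_slice_self x))
  unfold clarkeFilter
  infer_instance

noncomputable def diffQuot (φ : (Fin n → ℝ) → ℝ) (s : Fin n → ℝ) (p : (Fin n → ℝ) × ℝ) : ℝ :=
  (φ (p.1 + p.2 • s) - φ p.1) / p.2

lemma clarkeDeriv_eq_limsup :
    clarkeDeriv n Iz φ x s = limsup (diffQuot φ s) (clarkeFilter Iz x) := rfl

lemma eventually_pos_snd_clarkeFilter : ∀ᶠ p in clarkeFilter Iz x, 0 < p.2 :=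
  Eventually.prod_inr self_mem_nhdsWithin _

lemma tendsto_add_smul_clarkeFilter (hs : ∀ i ∈ Iz, s i = 0) :
    Tendsto (fun p => p.1 + p.2 • s) (clarkeFilter Iz x) (𝓝[slice Iz x] x) := by
  unfold clarkeFilter
  refine tendsto_nhdsWithin_iff.2 ⟨?_, ?_⟩
  · simpa using ((tendsto_fst.mono_right nhdsWithin_le_nhds).add
      ((tendsto_snd.mono_right nhdsWithin_le_nhds).smul_const s) :
        Tendsto _ (𝓝[slice Iz x] x ×ˢ 𝓝[>] (0 : ℝ)) (𝓝 (x + (0 : ℝ) • s)))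
  · exact (Eventually.prod_inl self_mem_nhdsWithin _).mono fun p hp =>
      add_smul_mem_slice hp hs p.2

lemma eventually_clarkeFilter {P : (Fin n → ℝ) → Prop} (hs : ∀ i ∈ Iz, s i = 0)
    (h : ∀ᶠ y in 𝓝[slice Iz x] x, P y) :
    ∀ᶠ p in clarkeFilter Iz x, P p.1 ∧ P (p.1 + p.2 • s) :=
  (tendsto_fst.eventually h).and ((tendsto_add_smul_clarkeFilter hs).eventually h)

lemma map_clarkeFilter_mul_snd (hc : 0 < c) :
    map (fun p => (p.1, c * p.2)) (clarkeFilter Iz x) = clarkeFilter Iz x := by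
  have h : map (c * ·) (𝓝[>] 0) = 𝓝[>] 0 := by
    simpa only [comap_mulLeft_nhdsGT_zero hc] using
      map_comap_of_surjective (mul_left_surjective₀ hc.ne') (𝓝[>] (0 : ℝ))
  calc map (fun p => (p.1, c * p.2)) (clarkeFilter Iz x)
      = map id (𝓝[slice Iz x] x) ×ˢ map (c * ·) (𝓝[>] 0) := (prod_map_map_eq' id (c * ·) _ _).symm
    _ = clarkeFilter Iz x := by rw [map_id, h]; rfl

lemma abs_diffQuot_le {K : ℝ≥0} (hφ : ∀ x, LipschitzOnWith K φ (slice Iz x))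
    (hs : ∀ i ∈ Iz, s i = 0) {p : (Fin n → ℝ) × ℝ} (hp : 0 < p.2) :
    |diffQuot φ s p| ≤ K * ‖s‖ := by
  obtain ⟨y, t⟩ := p
  have h := (hφ y).dist_le_mul _ (add_smul_mem_slice (mem_slice_self y) hs t) y (mem_slice_self y)
  rw [Real.dist_eq, dist_eq_norm, add_sub_cancel_left, norm_smul, Real.norm_of_nonneg hp.le] at h
  rw [diffQuot, abs_div, abs_of_pos hp, div_le_iff₀ hp]
  linarith

namespace SliceLipschitz

lemma isBoundedUnder_abs_diffQuot (hφ : SliceLipschitz Iz φ) (hs : ∀ i ∈ Iz, s i = 0) :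
    IsBoundedUnder (· ≤ ·) (clarkeFilter Iz x) fun p => |diffQuot φ s p| :=
  let ⟨_, hK⟩ := hφ
  isBoundedUnder_of_eventually_le <|
    eventually_pos_snd_clarkeFilter.mono fun _ hp => abs_diffQuot_le hK hs hp

lemma isBoundedUnder_le_diffQuot (hφ : SliceLipschitz Iz φ) (hs : ∀ i ∈ Iz, s i = 0) :
    IsBoundedUnder (· ≤ ·) (clarkeFilter Iz x) (diffQuot φ s) :=
  (isBoundedUnder_le_abs.1 (hφ.isBoundedUnder_abs_diffQuot hs)).1

lemma isBoundedUnder_ge_diffQuot (hφ : SliceLipschitz Iz φ) (hs : ∀ i ∈ Iz, s i = 0) :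
    IsBoundedUnder (· ≥ ·) (clarkeFilter Iz x) (diffQuot φ s) :=
  (isBoundedUnder_le_abs.1 (hφ.isBoundedUnder_abs_diffQuot hs)).2

lemma isCoboundedUnder_le_diffQuot (hφ : SliceLipschitz Iz φ) (hs : ∀ i ∈ Iz, s i = 0) :
    IsCoboundedUnder (· ≤ ·) (clarkeFilter Iz x) (diffQuot φ s) :=
  (hφ.isBoundedUnder_ge_diffQuot hs).isCoboundedUnder_le

end SliceLipschitz

lemma clarkeDeriv_le_of_eventually (hφ : SliceLipschitz Iz φ) (hs : ∀ i ∈ Iz, s i = 0)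
    (h : ∀ᶠ p in clarkeFilter Iz x, diffQuot φ s p ≤ c) : clarkeDeriv n Iz φ x s ≤ c :=
  limsup_le_of_le (hφ.isCoboundedUnder_le_diffQuot hs) h

lemma eventually_diffQuot_lt (hφ : SliceLipschitz Iz φ) (hs : ∀ i ∈ Iz, s i = 0)
    (h : clarkeDeriv n Iz φ x s < c) : ∀ᶠ p in clarkeFilter Iz x, diffQuot φ s p < c :=
  eventually_lt_of_limsup_lt h (hφ.isBoundedUnder_le_diffQuot hs)

lemma clarkeDeriv_le_mul_norm {K : ℝ≥0} (hφ : ∀ x, LipschitzOnWith K φ (slice Iz x))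
    (hs : ∀ i ∈ Iz, s i = 0) : clarkeDeriv n Iz φ x s ≤ K * ‖s‖ :=
  clarkeDeriv_le_of_eventually ⟨K, hφ⟩ hs <| eventually_pos_snd_clarkeFilter.mono fun _ hp =>
    (abs_le.1 (abs_diffQuot_le hφ hs hp)).2

lemma clarkeDeriv_zero_dir : clarkeDeriv n Iz φ x 0 = 0 := by
  have h : diffQuot φ 0 = fun _ => 0 := by ext p; simp [diffQuot]
  rw [clarkeDeriv_eq_limsup, h, limsup_const]

lemma clarkeDeriv_zero : clarkeDeriv n Iz 0 x s = 0 := by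
  have h : diffQuot 0 s = fun _ => 0 := by ext p; simp [diffQuot]
  rw [clarkeDeriv_eq_limsup, h, limsup_const]

lemma clarkeDeriv_add_le (hφ : SliceLipschitz Iz φ) (hψ : SliceLipschitz Iz ψ)
    (hs : ∀ i ∈ Iz, s i = 0) :
    clarkeDeriv n Iz (φ + ψ) x s ≤ clarkeDeriv n Iz φ x s + clarkeDeriv n Iz ψ x s := by
  have h : diffQuot (φ + ψ) s = diffQuot φ s + diffQuot ψ s := by
    ext p
    simp only [diffQuot, Pi.add_apply]
    ring
  rw [clarkeDeriv_eq_limsup, h]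
  exact limsup_add_le (hφ.isBoundedUnder_ge_diffQuot hs) (hφ.isBoundedUnder_le_diffQuot hs)
    (hψ.isCoboundedUnder_le_diffQuot hs) (hψ.isBoundedUnder_le_diffQuot hs)

lemma clarkeDeriv_sum_le {ι : Type*} (T : Finset ι) {φ : ι → (Fin n → ℝ) → ℝ}
    (hφ : ∀ i ∈ T, SliceLipschitz Iz (φ i)) (hs : ∀ i ∈ Iz, s i = 0) :
    clarkeDeriv n Iz (fun y => ∑ i ∈ T, φ i y) x s ≤ ∑ i ∈ T, clarkeDeriv n Iz (φ i) x s := by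
  rw [← Finset.sum_fn]
  exact Finset.le_sum_of_subadditive_on_pred (fun ψ => clarkeDeriv n Iz ψ x s) (SliceLipschitz Iz)
    clarkeDeriv_zero.le (fun _ _ h₁ h₂ => clarkeDeriv_add_le h₁ h₂ hs)
    (fun _ _ => SliceLipschitz.add) φ hφ

lemma clarkeDeriv_const_mul (hφ : SliceLipschitz Iz φ) (hs : ∀ i ∈ Iz, s i = 0) (hc : 0 ≤ c) :
    clarkeDeriv n Iz (fun y => c * φ y) x s = c * clarkeDeriv n Iz φ x s := by
  have h : diffQuot (fun y => c * φ y) s = (c * ·) ∘ diffQuot φ s := by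
    ext p
    simp only [diffQuot, Function.comp_apply]
    ring
  rw [clarkeDeriv_eq_limsup, h]
  exact ((monotone_mul_left_of_nonneg hc).map_limsup_of_continuousAt _
    (continuous_const_mul c).continuousAt (hφ.isBoundedUnder_le_diffQuot hs)
    (hφ.isCoboundedUnder_le_diffQuot hs)).symm

lemma clarkeDeriv_add_dir_le (hφ : SliceLipschitz Iz φ) {s' : Fin n → ℝ}
    (hs : ∀ i ∈ Iz, s i = 0) (hs' : ∀ i ∈ Iz, s' i = 0) :
    clarkeDeriv n Iz φ x (s + s') ≤ clarkeDeriv n Iz φ x s + clarkeDeriv n Iz φ x s' := by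
  set T : (Fin n → ℝ) × ℝ → (Fin n → ℝ) × ℝ := fun p => (p.1 + p.2 • s', p.2)
  have hT : Tendsto T (clarkeFilter Iz x) (clarkeFilter Iz x) :=
    (tendsto_add_smul_clarkeFilter hs').prodMk tendsto_snd
  have h : diffQuot φ (s + s') = diffQuot φ s ∘ T + diffQuot φ s' := by
    ext p
    simp only [diffQuot, T, Function.comp_apply, Pi.add_apply, smul_add, add_assoc]
    rw [add_comm (p.2 • s)]
    ring
  have hbdd : IsBoundedUnder (· ≤ ·) (clarkeFilter Iz x) (diffQuot φ s ∘ T) :=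
    isBoundedUnder_map_iff.1 ((hφ.isBoundedUnder_le_diffQuot hs).mono hT)
  have hbdd' : IsBoundedUnder (· ≥ ·) (clarkeFilter Iz x) (diffQuot φ s ∘ T) :=
    isBoundedUnder_map_iff.1 ((hφ.isBoundedUnder_ge_diffQuot hs).mono hT)
  rw [clarkeDeriv_eq_limsup, h]
  refine (limsup_add_le hbdd' hbdd (hφ.isCoboundedUnder_le_diffQuot hs')
    (hφ.isBoundedUnder_le_diffQuot hs')).trans (add_le_add_left ?_ _)
  rw [limsup_comp]
  exact limsup_le_limsup_of_le hT hbdd'.isCoboundedUnder_le (hφ.isBoundedUnder_le_diffQuot hs)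

lemma clarkeDeriv_smul_dir (hφ : SliceLipschitz Iz φ) (hs : ∀ i ∈ Iz, s i = 0) (hc : 0 < c) :
    clarkeDeriv n Iz φ x (c • s) = c * clarkeDeriv n Iz φ x s := by
  have h : diffQuot φ (c • s) = diffQuot (fun y => c * φ y) s ∘ fun p => (p.1, c * p.2) := by
    ext p
    simp only [diffQuot, Function.comp_apply, smul_smul, mul_comm p.2 c]
    field_simp
  rw [← clarkeDeriv_const_mul hφ hs hc.le, clarkeDeriv_eq_limsup, h, limsup_comp,
    map_clarkeFilter_mul_snd hc, clarkeDeriv_eq_limsup]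

lemma clarkeDeriv_max_zero_of_pos (hφ : SliceLipschitz Iz φ) (hs : ∀ i ∈ Iz, s i = 0)
    (hx : 0 < φ x) : clarkeDeriv n Iz (fun y => max 0 (φ y)) x s = clarkeDeriv n Iz φ x s :=
  limsup_congr <| (eventually_clarkeFilter hs
    ((hφ.continuousWithinAt x).eventually (eventually_gt_nhds hx))).mono fun p hp => by
      simp only [max_eq_right hp.1.le, max_eq_right hp.2.le]

lemma clarkeDeriv_max_zero_of_neg (hφ : SliceLipschitz Iz φ) (hs : ∀ i ∈ Iz, s i = 0)
    (hx : φ x < 0) : clarkeDeriv n Iz (fun y => max 0 (φ y)) x s = 0 := by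
  have h : ∀ᶠ p in clarkeFilter Iz x, diffQuot (fun y => max 0 (φ y)) s p = 0 :=
    (eventually_clarkeFilter hs
      ((hφ.continuousWithinAt x).eventually (eventually_lt_nhds hx))).mono fun p hp => by
        simp [diffQuot, max_eq_left hp.1.le, max_eq_left hp.2.le]
  rw [clarkeDeriv_eq_limsup, limsup_congr h, limsup_const]

lemma clarkeDeriv_max_zero_nonpos (hφ : SliceLipschitz Iz φ) (hs : ∀ i ∈ Iz, s i = 0)
    (h : clarkeDeriv n Iz φ x s < 0) : clarkeDeriv n Iz (fun y => max 0 (φ y)) x s ≤ 0 := by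
  refine clarkeDeriv_le_of_eventually hφ.max_zero hs <|
    ((eventually_diffQuot_lt hφ hs h).and eventually_pos_snd_clarkeFilter).mono fun p hp => ?_
  have hdec : φ (p.1 + p.2 • s) ≤ φ p.1 := by
    have := (div_lt_iff₀ hp.2).1 hp.1
    linarith
  exact div_nonpos_of_nonpos_of_nonneg (sub_nonpos.2 (max_le_max_left 0 hdec)) hp.2.le

lemma eventually_clarkeDeriv_le (hφ : SliceLipschitz Iz φ) (hs : ∀ i ∈ Iz, s i = 0)
    (h : clarkeDeriv n Iz φ x s < c) : ∀ᶠ y in 𝓝[slice Iz x] x, clarkeDeriv n Iz φ y s ≤ c := by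
  obtain ⟨P, hP, Q, hQ, hPQ⟩ := eventually_prod_iff.1 (eventually_diffQuot_lt hφ hs h)
  filter_upwards [eventually_eventually_nhdsWithin.2 hP, self_mem_nhdsWithin] with y hyP hy
  refine clarkeDeriv_le_of_eventually hφ hs ?_
  rw [clarkeFilter, slice_eq_of_mem hy]
  exact (hyP.prod_mk hQ).mono fun p hp => (hPQ hp.1 hp.2).le

lemma eventually_clarkeDeriv_max_zero_nonpos (hφ : SliceLipschitz Iz φ)
    (hs : ∀ i ∈ Iz, s i = 0) (h : 0 ≤ φ x → clarkeDeriv n Iz φ x s < 0) :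
    ∀ᶠ y in 𝓝[slice Iz x] x, clarkeDeriv n Iz (fun z => max 0 (φ z)) y s ≤ 0 := by
  rcases le_or_gt 0 (φ x) with hx | hx
  · set D := clarkeDeriv n Iz φ x s
    have hD : D < 0 := h hx
    exact (eventually_clarkeDeriv_le hφ hs (by linarith : D < D / 2)).mono fun y hy =>
      clarkeDeriv_max_zero_nonpos hφ hs (hy.trans_lt (by linarith))
  · exact ((hφ.continuousWithinAt x).eventually (eventually_lt_nhds hx)).mono fun y hy =>
      (clarkeDeriv_max_zero_of_neg hφ hs hy).le

end Clarke

theorem exists_linearMap_le_eq_of_sublinear {E : Type*} [AddCommGroup E] [Module ℝ E]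
    (N : E → ℝ) (N_hom : ∀ c : ℝ, 0 < c → ∀ x, N (c • x) = c * N x)
    (N_add : ∀ x y, N (x + y) ≤ N x + N y) (x : E) :
    ∃ Φ : E →ₗ[ℝ] ℝ, (∀ y, Φ y ≤ N y) ∧ Φ x = N x := by
  have N_zero : N 0 = 0 := by
    have := N_hom 2 two_pos 0
    rw [smul_zero] at this
    linarith
  have N_neg : ∀ y, -N y ≤ N (-y) := fun y => by
    have := N_add y (-y)
    rw [add_neg_cancel, N_zero] at this
    linarith
  have H : ∀ c : ℝ, c • x = 0 → c • N x = 0 := fun c hc => by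
    rcases smul_eq_zero.1 hc with rfl | rfl
    · exact zero_smul ℝ _
    · rw [N_zero, smul_zero]
  set f : E →ₗ.[ℝ] ℝ := LinearPMap.mkSpanSingleton' x (N x) H
  have hf : ∀ z : f.domain, f z ≤ N z := by
    rintro ⟨_, hz⟩
    obtain ⟨c, rfl⟩ := Submodule.mem_span_singleton.1 hz
    rw [LinearPMap.mkSpanSingleton'_apply, smul_eq_mul]
    rcases lt_trichotomy c 0 with hc | rfl | hc
    · calc c * N x = -c * -N x := by ring
        _ ≤ -c * N (-x) := mul_le_mul_of_nonneg_left (N_neg x) (by linarith)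
        _ = N (c • x) := by rw [← N_hom _ (neg_pos.2 hc), neg_smul_neg]
    · simp [N_zero]
    · exact (N_hom c hc x).ge
  obtain ⟨Φ, hΦf, hΦN⟩ := exists_extension_of_le_sublinear f N N_hom N_add hf
  refine ⟨Φ, hΦN, ?_⟩
  rw [hΦf ⟨x, Submodule.mem_span_singleton_self x⟩]
  exact LinearPMap.mkSpanSingleton'_apply_self x (N x) H _

section ClarkeGrad

variable {n : ℕ} {Iz : Finset (Fin n)} {φ : (Fin n → ℝ) → ℝ} {x s : Fin n → ℝ}

def contProj (Iz : Finset (Fin n)) : (Fin n → ℝ) →ₗ[ℝ] Fin n → ℝ where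
  toFun y j := if j ∈ Iz then 0 else y j
  map_add' y z := by ext j; by_cases hj : j ∈ Iz <;> simp [hj]
  map_smul' c y := by ext j; by_cases hj : j ∈ Iz <;> simp [hj]

lemma contProj_apply_of_mem (y : Fin n → ℝ) {i : Fin n} (hi : i ∈ Iz) : contProj Iz y i = 0 :=
  if_pos hi

lemma contProj_eq_self (hs : ∀ i ∈ Iz, s i = 0) : contProj Iz s = s := by
  ext j
  by_cases hj : j ∈ Iz
  · rw [contProj_apply_of_mem s hj, hs j hj]
  · exact if_neg hj

theorem exists_mem_clarkeGrad_eq (hφ : SliceLipschitz Iz φ) (hs : ∀ i ∈ Iz, s i = 0) :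
    ∃ ξ ∈ clarkeGrad n Iz φ x, ∑ j, ξ j * s j = clarkeDeriv n Iz φ x s := by
  -- `φ°(x; ·)` is sublinear only on directions fixing the integer coordinates (along the others
  -- the limsup is of unbounded quotients), hence the projection.
  set N : (Fin n → ℝ) → ℝ := fun y => clarkeDeriv n Iz φ x (contProj Iz y)
  have hP : ∀ y, ∀ i ∈ Iz, contProj Iz y i = 0 := fun y i hi => contProj_apply_of_mem y hi
  obtain ⟨Φ, hΦN, hΦs⟩ := exists_linearMap_le_eq_of_sublinear N
    (fun c hc y => by simp only [N, map_smul, clarkeDeriv_smul_dir hφ (hP y) hc])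
    (fun y z => by simpa only [N, map_add] using clarkeDeriv_add_dir_le hφ (hP y) (hP z)) s
  set ξ : Fin n → ℝ := fun j => Φ fun k => if j = k then 1 else 0
  have hΦ : ∀ y, ∑ j, ξ j * y j = Φ y := fun y => by
    rw [LinearMap.pi_apply_eq_sum_univ Φ y]
    exact Finset.sum_congr rfl fun j _ => by rw [smul_eq_mul, mul_comm]
  have hN : ∀ y, (∀ i ∈ Iz, y i = 0) → Φ y ≤ clarkeDeriv n Iz φ x y := fun y hy => by
    simpa only [N, contProj_eq_self hy] using hΦN y
  refine ⟨ξ, ⟨fun i hi => ?_, fun s' hs' => ?_⟩, ?_⟩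
  · have hzero : ∀ y, contProj Iz y = 0 → Φ y ≤ 0 := fun y hy => by
      simpa only [N, hy, clarkeDeriv_zero_dir] using hΦN y
    have he : contProj Iz (fun k => if i = k then (1 : ℝ) else 0) = 0 := by
      ext j
      by_cases hj : j ∈ Iz
      · exact contProj_apply_of_mem _ hj
      · simp [contProj, hj, show i ≠ j from fun h => hj (h ▸ hi)]
    have h₁ := hzero _ he
    have h₂ := hzero (-fun k => if i = k then (1 : ℝ) else 0) (by rw [map_neg, he, neg_zero])
    rw [map_neg] at h₂
    exact le_antisymm h₁ (by linarith)
  · simpa only [mul_comm (s' _), hΦ] using hN s' hs'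
  · rw [hΦ, hΦs]
    simp only [N, contProj_eq_self hs]

end ClarkeGrad

lemma exists_int_eventually_eq_of_tendsto {ι : Type*} {F : Filter ι} [F.NeBot] {u : ι → ℝ}
    {a : ℝ} (hu : Tendsto u F (𝓝 a)) (hint : ∀ k, ∃ z : ℤ, u k = z) :
    (∃ z : ℤ, a = z) ∧ ∀ᶠ k in F, u k = a := by
  choose z hz using hint
  have hnear : ∀ᶠ k in F, |u k - a| < 1 / 2 := by
    simpa [Real.dist_eq] using Metric.tendsto_nhds.1 hu _ one_half_pos
  obtain ⟨k₀, hk₀⟩ := hnear.exists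
  have hconst : ∀ᶠ k in F, u k = z k₀ := hnear.mono fun k hk => by
    have hlt : |((z k - z k₀ : ℤ) : ℝ)| < 1 := by
      push_cast
      rw [← hz k, ← hz k₀]
      linarith [abs_sub_le (u k) a (u k₀), abs_sub_comm a (u k₀)]
    have hzk : z k = z k₀ := sub_eq_zero.1 (Int.abs_lt_one_iff.1 (by exact_mod_cast hlt))
    rw [hz k, hzk]
  have ha : a = z k₀ :=
    tendsto_nhds_unique hu (tendsto_const_nhds.congr' (hconst.mono fun _ h => h.symm))
  exact ⟨⟨z k₀, ha⟩, hconst.mono fun _ h => h.trans ha.symm⟩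

section Problem

variable {n : ℕ} {Iz : Finset (Fin n)} {l u : Fin n → ℝ}

lemma isCompact_box : IsCompact (box n l u) := by
  have : box n l u = Icc l u := by
    ext x
    simp [box, Pi.le_def, forall_and]
  exact this ▸ isCompact_Icc

lemma tendsto_nhdsWithin_slice_of_mem_latt {ι : Type*} {F : Filter ι} [F.NeBot]
    {Y : ι → Fin n → ℝ} {x : Fin n → ℝ} (hY : Tendsto Y F (𝓝 x))
    (hlatt : ∀ k, Y k ∈ latt n Iz) : x ∈ latt n Iz ∧ Tendsto Y F (𝓝[slice Iz x] x) := by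
  have h i (hi : i ∈ Iz) := exists_int_eventually_eq_of_tendsto (tendsto_pi_nhds.1 hY i)
    fun k => hlatt k i hi
  exact ⟨fun i hi => (h i hi).1, tendsto_nhdsWithin_iff.2
    ⟨hY, (eventually_all_finset Iz).2 fun i hi => (h i hi).2⟩⟩

lemma eventually_mem_Dc {ι : Type*} {F : Filter ι} {Y : ι → Fin n → ℝ} {x s : Fin n → ℝ}
    (hY : Tendsto Y F (𝓝 x)) (hs : s ∈ Dc n Iz l u x) : ∀ᶠ k in F, s ∈ Dc n Iz l u (Y k) := by
  obtain ⟨hs0, hsl, hsu⟩ := hs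
  have hface : ∀ (b : Fin n → ℝ) (P : Prop) (i : Fin n), (x i = b i → P) →
      ∀ᶠ k in F, Y k i = b i → P := fun b P i hP => by
    by_cases hx : x i = b i
    · exact .of_forall fun _ _ => hP hx
    · exact ((tendsto_pi_nhds.1 hY i).eventually_ne hx).mono fun _ hk h => absurd h hk
  filter_upwards [eventually_all.2 fun i => hface l _ i fun h hi => hsl i hi h,
    eventually_all.2 fun i => hface u _ i fun h hi => hsu i hi h] with k hl hu
  exact ⟨hs0, fun i hi h => hl i h hi, fun i hi h => hu i h hi⟩

lemma mem_Dz_of_mem_slice {x y : Fin n → ℝ} {d : Fin n → ℤ} (hd : d ∈ Dz n Iz l u x)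
    (hy : y ∈ box n l u) (hyx : y ∈ slice Iz x) : d ∈ Dz n Iz l u y := by
  obtain ⟨hgcd, hd0, hbox, hlatt⟩ := hd
  refine ⟨hgcd, hd0, fun i => ?_, fun i hi => ?_⟩
  · by_cases hi : i ∈ Iz
    · simpa [hyx i hi] using hbox i
    · simpa [hd0 i hi] using hy i
  · simpa [hyx i hi] using hlatt i hi

end Problem

section Penalty

variable {n m : ℕ} {Iz : Finset (Fin n)} {f : (Fin n → ℝ) → ℝ} {g : Fin m → (Fin n → ℝ) → ℝ}
  {x s : Fin n → ℝ} {ι : Type*} {F : Filter ι} {Y : ι → Fin n → ℝ} {ε : ι → ℝ}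

noncomputable def penalty (f : (Fin n → ℝ) → ℝ) (g : Fin m → (Fin n → ℝ) → ℝ) (ε : ℝ)
    (x : Fin n → ℝ) : ℝ :=
  f x + (1 / ε) * ∑ i, max 0 (g i x)

lemma clarkeDeriv_penalty_le (hf : SliceLipschitz Iz f) (hg : ∀ i, SliceLipschitz Iz (g i))
    (hs : ∀ i ∈ Iz, s i = 0) {ε : ℝ} (hε : 0 < ε) :
    clarkeDeriv n Iz (penalty f g ε) x s ≤
      clarkeDeriv n Iz f x s + (1 / ε) * ∑ i, clarkeDeriv n Iz (fun y => max 0 (g i y)) x s := by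
  have hmax i : SliceLipschitz Iz fun y => max 0 (g i y) := (hg i).max_zero
  have hsum := SliceLipschitz.sum Finset.univ fun i _ => hmax i
  calc clarkeDeriv n Iz (penalty f g ε) x s
      ≤ clarkeDeriv n Iz f x s +
          clarkeDeriv n Iz (fun y => (1 / ε) * ∑ i, max 0 (g i y)) x s :=
        clarkeDeriv_add_le hf (hsum.const_mul _) hs
    _ = clarkeDeriv n Iz f x s +
          (1 / ε) * clarkeDeriv n Iz (fun y => ∑ i, max 0 (g i y)) x s := by
        rw [clarkeDeriv_const_mul hsum hs (by positivity)]
    _ ≤ _ := by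
        gcongr
        exact clarkeDeriv_sum_le _ (fun i _ => hmax i) hs

lemma frequently_clarkeDeriv_penalty_neg [F.NeBot] (hf : SliceLipschitz Iz f)
    (hg : ∀ i, SliceLipschitz Iz (g i)) (hs : ∀ i ∈ Iz, s i = 0)
    (hneg : ∀ i, 0 ≤ g i x → clarkeDeriv n Iz (g i) x s < 0)
    (hY : Tendsto Y F (𝓝[slice Iz x] x)) (hviol : ∀ k, ∃ i, 0 < g i (Y k))
    (hε : Tendsto ε F (𝓝[>] 0)) :
    ∃ᶠ k in F, clarkeDeriv n Iz (penalty f g (ε k)) (Y k) s < 0 := by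
  obtain ⟨i₀, hi₀⟩ : ∃ i₀, ∃ᶠ k in F, 0 < g i₀ (Y k) := by
    by_contra! h
    obtain ⟨k, hk⟩ := (eventually_all.2 h).exists
    obtain ⟨i, hi⟩ := hviol k
    exact (hk i).not_gt hi
  set D := clarkeDeriv n Iz (g i₀) x s
  have hD : D < 0 :=
    hneg i₀ (ge_of_tendsto_of_frequently ((hg i₀).tendsto hY) (hi₀.mono fun _ h => h.le))
  obtain ⟨K, hK⟩ := hf
  have hmax : ∀ᶠ k in F, ∀ i, clarkeDeriv n Iz (fun y => max 0 (g i y)) (Y k) s ≤ 0 :=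
    eventually_all.2 fun i =>
      hY.eventually (eventually_clarkeDeriv_max_zero_nonpos (hg i) hs (hneg i))
  have hi₀D : ∀ᶠ k in F, clarkeDeriv n Iz (g i₀) (Y k) s ≤ D / 2 :=
    hY.eventually (eventually_clarkeDeriv_le (hg i₀) hs (by linarith))
  have hlarge : ∀ᶠ k in F, 2 * K * ‖s‖ / -D < (ε k)⁻¹ :=
    (tendsto_inv_nhdsGT_zero.comp hε).eventually_gt_atTop _
  have hpos : ∀ᶠ k in F, 0 < ε k := hε.eventually self_mem_nhdsWithin
  refine (hi₀.and_eventually (hmax.and (hi₀D.and (hlarge.and hpos)))).mono ?_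
  rintro k ⟨hk, hmaxk, hDk, hlargek, hεk⟩
  have hsum : ∑ i, clarkeDeriv n Iz (fun y => max 0 (g i y)) (Y k) s ≤ D / 2 := by
    rw [← Finset.add_sum_erase _ _ (Finset.mem_univ i₀),
      clarkeDeriv_max_zero_of_pos (hg i₀) hs hk]
    linarith [Finset.sum_nonpos fun i (_ : i ∈ Finset.univ.erase i₀) => hmaxk i]
  have hf_le := clarkeDeriv_le_mul_norm hK hs (x := Y k)
  have hpen := clarkeDeriv_penalty_le ⟨K, hK⟩ hg hs hεk (x := Y k)
  have h₁ : 2 * K * ‖s‖ < (ε k)⁻¹ * -D := (div_lt_iff₀ (neg_pos.2 hD)).1 hlargek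
  have h₂ := mul_le_mul_of_nonneg_left hsum (inv_pos.2 hεk).le
  rw [one_div] at hpen
  linarith

lemma eventually_penalty_add_lt (hf : SliceLipschitz Iz f) (hg : ∀ i, SliceLipschitz Iz (g i))
    {v : Fin n → ℝ} (hv : ∑ i, max 0 (g i (x + v)) < ∑ i, max 0 (g i x))
    (hY : Tendsto Y F (𝓝[slice Iz x] x)) (hε : Tendsto ε F (𝓝[>] 0)) :
    ∀ᶠ k in F, penalty f g (ε k) (Y k + v) < penalty f g (ε k) (Y k) := by
  have hh : SliceLipschitz Iz fun y => ∑ i, max 0 (g i y) :=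
    SliceLipschitz.sum _ fun i _ => (hg i).max_zero
  have hYv := tendsto_add_const_nhdsWithin_slice hY v
  have hgain := ((tendsto_inv_nhdsGT_zero.comp hε).atTop_mul_pos (sub_pos.2 hv)
    ((hh.tendsto hY).sub (hh.tendsto hYv))).atTop_add ((hf.tendsto hYv).sub (hf.tendsto hY)).neg
  filter_upwards [hgain.eventually_gt_atTop 0] with k hk
  simp only [Function.comp_apply, mul_sub] at hk
  simp only [penalty, one_div]
  linarith

end Penalty

theorem penalty_no_stationary_points_outside_feasible_general
    (n m : ℕ) (Iz : Finset (Fin n)) (l u : Fin n → ℝ)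
    (f : (Fin n → ℝ) → ℝ) (g : Fin m → (Fin n → ℝ) → ℝ) (Lf : ℝ) (Lg : Fin m → ℝ)
    (hf : ∀ x y : Fin n → ℝ, (∀ i ∈ Iz, x i = y i) →
      |f x - f y| ≤ Lf * Real.sqrt (∑ i, (x i - y i) ^ 2))
    (hg : ∀ i, ∀ x y : Fin n → ℝ, (∀ j ∈ Iz, x j = y j) →
      |g i x - g i y| ≤ Lg i * Real.sqrt (∑ j, (x j - y j) ^ 2))
    -- EMFCQ for mixed-integer problems:
    (hEMFCQ : ∀ x ∈ box n l u ∩ latt n Iz,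
      x ∉ interior {y : Fin n → ℝ | ∀ i, g i y ≤ 0} →
      (∃ s ∈ Dc n Iz l u x, ∀ i, 0 ≤ g i x →
          ∀ ξ ∈ clarkeGrad n Iz (g i) x, (∑ j, ξ j * s j) < 0) ∨
      (∃ d ∈ Dz n Iz l u x,
          (∑ i, max 0 (g i (fun j => x j + (d j : ℝ)))) < ∑ i, max 0 (g i x))) :
    ∃ εstar > (0 : ℝ), ∀ ε : ℝ, 0 < ε → ε ≤ εstar →
      ∀ xbar ∈ box n l u ∩ latt n Iz, ¬ (∀ i, g i xbar ≤ 0) →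
        ¬ ((∀ s ∈ Dc n Iz l u xbar,
              0 ≤ clarkeDeriv n Iz
                    (fun x => f x + (1 / ε) * ∑ i, max 0 (g i x)) xbar s) ∧
           (∀ x ∈ Bz n Iz l u xbar,
              f xbar + (1 / ε) * ∑ i, max 0 (g i xbar) ≤
                f x + (1 / ε) * ∑ i, max 0 (g i x))) := by
  have hfL : SliceLipschitz Iz f := sliceLipschitz_of_abs_sub_le hf
  have hgL i : SliceLipschitz Iz (g i) := sliceLipschitz_of_abs_sub_le (hg i)
  by_contra! hcon
  choose ε hε hεle x hx hviol hstat hmin using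
    fun k : ℕ => hcon (1 / ((k : ℝ) + 1)) Nat.one_div_pos_of_nat
  have hε0 : Tendsto ε atTop (𝓝[>] 0) := tendsto_nhdsWithin_iff.2
    ⟨squeeze_zero (fun k => (hε k).le) hεle tendsto_one_div_add_atTop_nhds_zero_nat, .of_forall hε⟩
  obtain ⟨xb, hxb, ψ, hψ, hlim⟩ := isCompact_box.tendsto_subseq fun k => (hx k).1
  obtain ⟨hxbZ, hY⟩ := tendsto_nhdsWithin_slice_of_mem_latt hlim fun k => (hx (ψ k)).2
  have hεψ := hε0.comp hψ.tendsto_atTop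
  have hxbF : xb ∉ interior {y : Fin n → ℝ | ∀ i, g i y ≤ 0} := by
    rw [← mem_compl_iff, ← closure_compl]
    exact mem_closure_of_tendsto hlim (.of_forall fun k hk =>
      let ⟨j, hj⟩ := hviol (ψ k); (hk j).not_gt hj)
  rcases hEMFCQ xb ⟨hxb, hxbZ⟩ hxbF with ⟨s, hs, hneg⟩ | ⟨d, hd, hdesc⟩
  · have hDneg j (hj : 0 ≤ g j xb) : clarkeDeriv n Iz (g j) xb s < 0 := by
      obtain ⟨ξ, hξ, hξs⟩ := exists_mem_clarkeGrad_eq (hgL j) hs.1 (x := xb)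
      exact hξs ▸ hneg j hj ξ hξ
    obtain ⟨k, hk, hkDc⟩ := ((frequently_clarkeDeriv_penalty_neg hfL hgL hs.1 hDneg hY
      (fun k => hviol (ψ k)) hεψ).and_eventually (eventually_mem_Dc hlim hs)).exists
    exact hk.not_ge (hstat (ψ k) s hkDc)
  · have hDz : ∀ᶠ k in atTop, d ∈ Dz n Iz l u (x (ψ k)) :=
      (tendsto_nhdsWithin_iff.1 hY).2.mono fun k hk => mem_Dz_of_mem_slice hd (hx (ψ k)).1 hk
    obtain ⟨k, hk, hkDz⟩ :=
      ((eventually_penalty_add_lt hfL hgL hdesc hY hεψ).and hDz).exists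
    exact hk.not_ge (hmin (ψ k) _ ⟨d, hkDz, rfl⟩)

/-- under the mixed-integer EMFCQ, a threshold `ε* > 0` exists such that
for all `ε ∈ (0, ε*]` the penalty function `P(x;ε)` has no Clarke stationary points in
`(X ∩ Z) \ F`. -/
theorem penalty_no_stationary_points_outside_feasible
    (n m : ℕ) (Iz : Finset (Fin n)) (l u : Fin n → ℝ) (hlu : ∀ i, l i < u i)
    (f : (Fin n → ℝ) → ℝ) (g : Fin m → (Fin n → ℝ) → ℝ) (Lf : ℝ) (Lg : Fin m → ℝ)
    (hf : ∀ x y : Fin n → ℝ, (∀ i ∈ Iz, x i = y i) →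
      |f x - f y| ≤ Lf * Real.sqrt (∑ i, (x i - y i) ^ 2))
    (hg : ∀ i, ∀ x y : Fin n → ℝ, (∀ j ∈ Iz, x j = y j) →
      |g i x - g i y| ≤ Lg i * Real.sqrt (∑ j, (x j - y j) ^ 2))
    -- EMFCQ for mixed-integer problems:
    (hEMFCQ : ∀ x ∈ box n l u ∩ latt n Iz,
      x ∉ interior {y : Fin n → ℝ | ∀ i, g i y ≤ 0} →
      (∃ s ∈ Dc n Iz l u x, ∀ i, 0 ≤ g i x →
          ∀ ξ ∈ clarkeGrad n Iz (g i) x, (∑ j, ξ j * s j) < 0) ∨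
      (∃ d ∈ Dz n Iz l u x,
          (∑ i, max 0 (g i (fun j => x j + (d j : ℝ)))) < ∑ i, max 0 (g i x))) :
    ∃ εstar > (0 : ℝ), ∀ ε : ℝ, 0 < ε → ε ≤ εstar →
      ∀ xbar ∈ box n l u ∩ latt n Iz, ¬ (∀ i, g i xbar ≤ 0) →
        ¬ ((∀ s ∈ Dc n Iz l u xbar,
              0 ≤ clarkeDeriv n Iz
                    (fun x => f x + (1 / ε) * ∑ i, max 0 (g i x)) xbar s) ∧
           (∀ x ∈ Bz n Iz l u xbar,
              f xbar + (1 / ε) * ∑ i, max 0 (g i xbar) ≤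
                f x + (1 / ε) * ∑ i, max 0 (g i x))) :=
  penalty_no_stationary_points_outside_feasible_general n m Iz l u f g Lf Lg hf hg hEMFCQ
end
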